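/- arXiv:2412.06411 — 3 statements merged into one kernel-verified Lean document; each statement's English description precedes it below -/
import Mathlib

section
/- Let D ⊂ ℂ be a domain, let φ_j : D → D be a sequence of continuous maps converging locally uniformly to the constant map with value p ∈ ∂D, and let U be an open neighbourhood of p such that U ∩ D is simply connected. Then every loop γ in D is null-homotopic in D; i.e., D is simply connected. -/
/-!
Two paths in `D` with common endpoints sweep out a compact set, which by uniform convergence
some `φ_j` pushes into `U`. Their images under the homeomorphism `φ_j` then lie in the simply
connected set `U ∩ D` and are homotopic there; pulling the homotopy back along `φ_j⁻¹` shows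
that the paths were already homotopic in `D`.
-/

open Set Topology

theorem TendstoUniformlyOn.eventually_mapsTo_of_tendsto_const {ι α β : Type*} [UniformSpace β]
    {F : ι → α → β} {p : β} {l : Filter ι} {K : Set α}
    (h : TendstoUniformlyOn F (fun _ => p) l K) {U : Set β} (hU : U ∈ 𝓝 p) :
    ∀ᶠ n in l, MapsTo (F n) K U := by
  obtain ⟨V, hV, hVU⟩ := UniformSpace.mem_nhds_iff.mp hU
  filter_upwards [h V hV] with n hn x hx using hVU (hn x hx)

namespace Path.Homotopic

variable {X Y : Type*} [TopologicalSpace X] [TopologicalSpace Y] {x y : X}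

theorem of_map_homeomorph (e : X ≃ₜ Y) {γ₀ γ₁ : Path x y}
    (h : (γ₀.map e.continuous).Homotopic (γ₁.map e.continuous)) : γ₀.Homotopic γ₁ := by
  have hx := (e.symm_apply_apply x).symm
  have hy := (e.symm_apply_apply y).symm
  have map_symm_map : ∀ γ : Path x y,
      ((γ.map e.continuous).map e.symm.continuous).cast hx hy = γ := fun γ => by ext t; simp
  simpa only [map_symm_map] using (h.map (e.symm : C(Y, X))).pathCast hx hy

theorem of_range_subset {A : Set X} (hA : IsSimplyConnected A) {γ₀ γ₁ : Path x y}
    (h₀ : range γ₀ ⊆ A) (h₁ : range γ₁ ⊆ A) : γ₀.Homotopic γ₁ := by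
  have := hA.simplyConnectedSpace
  have hxA : x ∈ A := γ₀.source ▸ h₀ (mem_range_self 0)
  have hyA : y ∈ A := γ₀.target ▸ h₀ (mem_range_self 1)
  let restrict (γ : Path x y) (hγ : range γ ⊆ A) : Path (⟨x, hxA⟩ : A) ⟨y, hyA⟩ :=
    { toFun t := ⟨γ t, hγ (mem_range_self t)⟩
      continuous_toFun := γ.continuous.subtype_mk _
      source' := Subtype.ext γ.source
      target' := Subtype.ext γ.target }
  exact (SimplyConnectedSpace.paths_homotopic (restrict γ₀ h₀) (restrict γ₁ h₁)).map
    ⟨Subtype.val, continuous_subtype_val⟩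

end Path.Homotopic

theorem simplyConnected_of_orbit_to_collared_point_general
    (D : Set ℂ) (hD : IsOpen D) (hDconn : IsConnected D)
    (p : ℂ)
    (φ : ℕ → ℂ → ℂ)
    (hφhomeo : ∀ j, ∃ e : D ≃ₜ D, ∀ x : D, (e x : ℂ) = φ j x)
    (hconv : TendstoLocallyUniformlyOn φ (fun _ => p) Filter.atTop D)
    (U : Set ℂ) (hU : IsOpen U) (hpU : p ∈ U)
    (hUD : SimplyConnectedSpace (U ∩ D : Set ℂ)) :
    SimplyConnectedSpace D := by
  refine simply_connected_iff_paths_homotopic'.mpr ⟨?_, fun {x y} γ₀ γ₁ => ?_⟩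
  · exact isPathConnected_iff_pathConnectedSpace.mp (hD.isConnected_iff_isPathConnected.mp hDconn)
  have hUD' : IsSimplyConnected ((↑) ⁻¹' U : Set D) := by
    rwa [← IsEmbedding.subtypeVal.isSimplyConnected_image, Subtype.image_preimage_coe, inter_comm]
  set K : Set D := range γ₀ ∪ range γ₁
  have hK : IsCompact ((↑) '' K : Set ℂ) :=
    ((isCompact_range γ₀.continuous).union (isCompact_range γ₁.continuous)).image
      continuous_subtype_val
  have hKD : (↑) '' K ⊆ D := image_subset_iff.mpr fun z _ => z.2
  obtain ⟨j, hj⟩ := ((tendstoLocallyUniformlyOn_iff_tendstoUniformlyOn_of_compact hK).mp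
    (hconv.mono hKD)).eventually_mapsTo_of_tendsto_const (hU.mem_nhds hpU) |>.exists
  obtain ⟨e, he⟩ := hφhomeo j
  have hmaps : MapsTo e K ((↑) ⁻¹' U) := fun z hz => by
    simpa only [mem_preimage, he] using hj (mem_image_of_mem _ hz)
  refine Path.Homotopic.of_map_homeomorph e (.of_range_subset hUD' ?_ ?_) <;>
    rintro _ ⟨t, rfl⟩
  exacts [hmaps (.inl (mem_range_self t)), hmaps (.inr (mem_range_self t))]

/-- If a domain `D ⊂ ℂ` admits self-homeomorphisms `φ_j` converging locally uniformly to a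
constant boundary value `p`, and `p` has a neighbourhood `U` with `U ∩ D` simply connected,
then `D` is simply connected. -/
theorem simplyConnected_of_orbit_to_collared_point
    (D : Set ℂ) (hD : IsOpen D) (hDconn : IsConnected D)
    (p : ℂ) (hp : p ∈ frontier D)
    (φ : ℕ → ℂ → ℂ)
    (hφcont : ∀ j, ContinuousOn (φ j) D)
    (hφmaps : ∀ j, MapsTo (φ j) D D)
    (hφhomeo : ∀ j, ∃ e : D ≃ₜ D, ∀ x : D, (e x : ℂ) = φ j x)
    (hconv : TendstoLocallyUniformlyOn φ (fun _ => p) Filter.atTop D)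
    (U : Set ℂ) (hU : IsOpen U) (hpU : p ∈ U)
    (hUD : SimplyConnectedSpace (U ∩ D : Set ℂ)) :
    SimplyConnectedSpace D :=
  simplyConnected_of_orbit_to_collared_point_general D hD hDconn p φ hφhomeo hconv U hU hpU hUD
end

section
/- Let ρ be a C² real-valued function defined near a point p ∈ ℂ with ρ(p) arbitrary, and let p_j → p with ρ(p_j) → 0, ρ(p_j) < 0. Define T_j(z) = (z − p_j)/(−ρ(p_j)). Then for every R > 0, the functions z ↦ (1/(−ρ(p_j))) · ρ(T_j^{-1}(z)) are eventually defined on the ball B(0,R) and converge uniformly on B(0,R) to z ↦ −1 + 2 Re(∂ρ(p) · z), where ∂ρ(p) = (ρ_x(p) − i ρ_y(p))/2. -/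
open Set Filter

lemma wre_aux (L : ℂ →L[ℝ] ℝ) (z : ℂ) :
    2 * ((((L 1 : ℝ) : ℂ) - Complex.I * ((L Complex.I : ℝ) : ℂ)) / 2 * z).re = L z := by
  have hz : z = z.re • (1:ℂ) + z.im • Complex.I := by
    simp [Complex.ext_iff]
  rw [show L z = L (z.re • (1:ℂ) + z.im • Complex.I) from by rw [← hz]]
  rw [map_add, map_smul, map_smul]
  simp [Complex.mul_re, Complex.div_re, Complex.normSq]
  ring


/-- Wirtinger derivative of a real-valued function: `∂ρ(p) = (ρ_x(p) − i ρ_y(p))/2`. -/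
noncomputable def wirtingerZR (ρ : ℂ → ℝ) (p : ℂ) : ℂ :=
  ((fderiv ℝ ρ p 1 : ℂ) - Complex.I * (fderiv ℝ ρ p Complex.I : ℂ)) / 2

/-- Scaling a `C²` function `ρ` along a sequence `p_j → p` with `ρ(p_j) → 0⁻` by
`T_j(z) = (z − p_j)/(−ρ(p_j))`: the renormalized functions `(1/(−ρ(p_j))) ρ ∘ T_j⁻¹` are
eventually defined on each ball `B(0,R)` and converge uniformly there to
`z ↦ −1 + 2 Re(∂ρ(p) z)`. -/
theorem scaled_defining_function_converges
    (U : Set ℂ) (hU : IsOpen U) (p : ℂ) (hp : p ∈ U)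
    (ρ : ℂ → ℝ) (hρ : ContDiffOn ℝ 2 ρ U)
    (pj : ℕ → ℂ) (hpj : Tendsto pj atTop (nhds p))
    (hneg : ∀ j, ρ (pj j) < 0)
    (hρ0 : Tendsto (fun j => ρ (pj j)) atTop (nhds 0)) :
    ∀ R > (0 : ℝ),
      (∀ᶠ j in atTop, ∀ z ∈ Metric.closedBall (0 : ℂ) R,
          pj j - (ρ (pj j) : ℂ) * z ∈ U) ∧
      TendstoUniformlyOn
        (fun j z => (1 / (-ρ (pj j))) * ρ (pj j - (ρ (pj j) : ℂ) * z))
        (fun z => -1 + 2 * (wirtingerZR ρ p * z).re)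
        atTop (Metric.closedBall (0 : ℂ) R) := by
  intro R hR
  set L := fderiv ℝ ρ p with hL
  -- ball inside U
  obtain ⟨r0, hr0, hball⟩ : ∃ r0 > 0, Metric.closedBall p r0 ⊆ U := by
    obtain ⟨r, hr, h⟩ := Metric.isOpen_iff.mp hU p hp
    exact ⟨r/2, by linarith, (Metric.closedBall_subset_ball (by linarith)).trans h⟩
  have hdiff : DifferentiableOn ℝ ρ U := hρ.differentiableOn (by norm_num)
  have hcont : ContinuousOn (fun q => fderiv ℝ ρ q) U := by
    have := hρ.continuousOn_fderivWithin (hU.uniqueDiffOn) (by norm_num)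
    refine this.congr fun q hq => ?_
    exact (fderivWithin_of_isOpen hU hq).symm
  -- generic membership estimate
  have hmem : ∀ (c : ℝ), 0 < c → ∀ j, dist (pj j) p ≤ c / 2 → |ρ (pj j)| ≤ c / (2 * (R + 1)) →
      ∀ z ∈ Metric.closedBall (0:ℂ) R, pj j - (ρ (pj j) : ℂ) * z ∈ Metric.closedBall p c := by
    intro c hc j hj1 hj2 z hz
    rw [Metric.mem_closedBall] at hz ⊢
    have hz' : ‖z‖ ≤ R := by simpa [dist_eq_norm] using hz
    have : dist (pj j - (ρ (pj j) : ℂ) * z) p ≤ dist (pj j) p + ‖(ρ (pj j) : ℂ) * z‖ := by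
      rw [dist_eq_norm, dist_eq_norm]
      calc ‖pj j - (ρ (pj j) : ℂ) * z - p‖ = ‖(pj j - p) + (-((ρ (pj j) : ℂ) * z))‖ := by ring_nf
        _ ≤ ‖pj j - p‖ + ‖-((ρ (pj j) : ℂ) * z)‖ := norm_add_le _ _
        _ = ‖pj j - p‖ + ‖(ρ (pj j) : ℂ) * z‖ := by rw [norm_neg]
    refine this.trans ?_
    have h2 : ‖(ρ (pj j) : ℂ) * z‖ ≤ (c / (2 * (R + 1))) * R := by
      rw [norm_mul, Complex.norm_real]
      exact mul_le_mul hj2 hz' (norm_nonneg _) (by positivity)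
    have h3 : (c / (2 * (R + 1))) * R ≤ c / 2 := by
      rw [div_mul_eq_mul_div, div_le_div_iff₀ (by positivity) (by norm_num)]
      nlinarith
    linarith
  constructor
  · -- eventual membership in U
    have h1 := (Metric.tendsto_nhds.mp hpj (r0/2) (by positivity))
    have h2 := (Metric.tendsto_nhds.mp hρ0 (r0 / (2 * (R + 1))) (by positivity))
    filter_upwards [h1, h2] with j hj1 hj2 z hz
    refine hball (hmem r0 hr0 j hj1.le ?_ z hz)
    simpa [Real.dist_eq] using hj2.le
  · rw [Metric.tendstoUniformlyOn_iff]
    intro ε hε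
    set δ := ε / (2 * (R + 1)) with hδ
    have hδpos : 0 < δ := by positivity
    -- continuity of the derivative at p
    have hca : ContinuousAt (fun q => fderiv ℝ ρ q) p := hcont.continuousAt (hU.mem_nhds hp)
    obtain ⟨r1, hr1, hLr⟩ : ∃ r1 > 0, ∀ q, dist q p < r1 → ‖fderiv ℝ ρ q - L‖ ≤ δ := by
      obtain ⟨r1, hr1, h⟩ := Metric.continuousAt_iff.mp hca δ hδpos
      exact ⟨r1, hr1, fun q hq => by simpa [dist_eq_norm] using (h hq).le⟩
    set r2 := min r1 r0 / 2 with hr2def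
    have hr2 : 0 < r2 := by positivity
    have hsubU : Metric.closedBall p r2 ⊆ U := by
      refine (Metric.closedBall_subset_closedBall ?_).trans hball
      calc r2 ≤ r0 / 2 := by unfold r2; gcongr; exact min_le_right _ _
        _ ≤ r0 := by linarith
    have hsubL : ∀ q ∈ Metric.closedBall p r2, ‖fderiv ℝ ρ q - L‖ ≤ δ := by
      intro q hq
      refine hLr q ?_
      have : dist q p ≤ r2 := hq
      have : r2 < r1 := by
        unfold r2
        calc min r1 r0 / 2 ≤ r1 / 2 := by gcongr; exact min_le_left _ _
          _ < r1 := by linarith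
      linarith
    have h1 := (Metric.tendsto_nhds.mp hpj (r2/2) (by positivity))
    have h2 := (Metric.tendsto_nhds.mp hρ0 (r2 / (2 * (R + 1))) (by positivity))
    filter_upwards [h1, h2] with j hj1 hj2 z hz
    set εj := -ρ (pj j) with hεjdef
    have hεj : 0 < εj := by have := hneg j; unfold εj; linarith
    set y := pj j - (ρ (pj j) : ℂ) * z with hy
    have hz' : ‖z‖ ≤ R := by simpa [dist_eq_norm] using hz
    have hjabs : |ρ (pj j)| ≤ r2 / (2 * (R + 1)) := by simpa [Real.dist_eq] using hj2.le
    have hymem : y ∈ Metric.closedBall p r2 := hmem r2 hr2 j hj1.le hjabs z hz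
    have hpjmem : pj j ∈ Metric.closedBall p r2 := by
      rw [Metric.mem_closedBall]; linarith [hj1.le]
    -- mean value inequality on g = ρ - L
    have hder : ∀ q ∈ Metric.closedBall p r2,
        HasFDerivWithinAt (fun x => ρ x - L x) (fderiv ℝ ρ q - L) (Metric.closedBall p r2) q := by
      intro q hq
      have hdq : HasFDerivAt ρ (fderiv ℝ ρ q) q :=
        ((hdiff q (hsubU hq)).differentiableAt (hU.mem_nhds (hsubU hq))).hasFDerivAt
      exact (hdq.sub (L.hasFDerivAt)).hasFDerivWithinAt
    have key := (convex_closedBall p r2).norm_image_sub_le_of_norm_hasFDerivWithin_le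
      hder hsubL hpjmem hymem
    -- ‖(ρ y - L y) - (ρ (pj j) - L (pj j))‖ ≤ δ * ‖y - pj j‖
    have hydiff : y - pj j = εj • z := by
      unfold y εj
      push_cast
      rw [Complex.real_smul]
      push_cast
      ring
    have hLy : L y - L (pj j) = εj * L z := by
      rw [← map_sub, hydiff, map_smul, smul_eq_mul]
    have hynorm : ‖y - pj j‖ ≤ εj * R := by
      rw [hydiff, norm_smul, Real.norm_eq_abs, abs_of_pos hεj]
      exact mul_le_mul_of_nonneg_left hz' hεj.le
    have hρpj : ρ (pj j) = -εj := by unfold εj; ring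
    -- rewrite the target
    have htarget : (-1 : ℝ) + 2 * (wirtingerZR ρ p * z).re = -1 + L z := by
      rw [wirtingerZR, ← hL, wre_aux]
    rw [dist_eq_norm, htarget]
    have heq : (-1 : ℝ) + L z - (1 / εj) * ρ y
        = -(1 / εj) * ((ρ y - L y) - (ρ (pj j) - L (pj j))) := by
      have h1 : L y = L (pj j) + εj * L z := by linarith [hLy]
      rw [h1, hρpj]
      field_simp
      ring
    rw [heq]
    have : ‖-(1 / εj) * ((ρ y - L y) - (ρ (pj j) - L (pj j)))‖
        = (1 / εj) * ‖(ρ y - L y) - (ρ (pj j) - L (pj j))‖ := by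
      rw [norm_mul, norm_neg, Real.norm_eq_abs, abs_of_pos (by positivity)]
    rw [this]
    have hbound : ‖(ρ y - L y) - (ρ (pj j) - L (pj j))‖ ≤ δ * (εj * R) :=
      key.trans (by exact mul_le_mul_of_nonneg_left hynorm hδpos.le)
    calc (1 / εj) * ‖(ρ y - L y) - (ρ (pj j) - L (pj j))‖
        ≤ (1 / εj) * (δ * (εj * R)) := by
          exact mul_le_mul_of_nonneg_left hbound (by positivity)
      _ = δ * R := by field_simp
      _ < ε := by
          unfold δ
          rw [div_mul_eq_mul_div, div_lt_iff₀ (by positivity)]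
          nlinarith
end

section
/- Let D ⊂ ℂ be a bounded domain with C² boundary near p ∈ ∂D, defining function ρ (i.e., U ∩ D = {ρ < 0}, dρ ≠ 0 on U ∩ ∂D), and let p_j ∈ D ∩ U with p_j → p. Set T_j(z) = (z − p_j)/(−ρ(p_j)). Then the kernel of the sequence of domains T_j(D) is the half-plane ℍ⁻ = {z : −1 + 2 Re(∂ρ(p) z) < 0}, and the kernel of the complements (T_j(D))^c is ℍ⁺ = {z : −1 + 2 Re(∂ρ(p) z) > 0}. -/
open Set Filter

/-- The kernel of a sequence of sets: `ker(D_j) = ⋃_{ν} int(⋂_{μ ≥ ν} D_μ)`. -/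
def seqKernel {X : Type*} [TopologicalSpace X] (D : ℕ → Set X) : Set X :=
  ⋃ ν : ℕ, interior (⋂ μ ∈ {μ : ℕ | ν ≤ μ}, D μ)

lemma wirt_linear (ρ : ℂ → ℝ) (p : ℂ) (w : ℂ) :
    (fderiv ℝ ρ p) w = 2 * (wirtingerZR ρ p * w).re := by
  set f := fderiv ℝ ρ p
  have hw : w = w.re • (1:ℂ) + w.im • Complex.I := by
    simp [Complex.real_smul, Complex.re_add_im]
  have h1 : f w = w.re * f 1 + w.im * f Complex.I := by
    conv_lhs => rw [hw]
    rw [map_add, map_smul, map_smul, smul_eq_mul, smul_eq_mul]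
  rw [h1]
  simp [wirtingerZR, Complex.div_re, Complex.mul_re, Complex.normSq]
  ring

lemma key_est (U : Set ℂ) (hU : IsOpen U) (p : ℂ) (hpU : p ∈ U)
    (ρ : ℂ → ℝ) (hρ : ContDiffOn ℝ 2 ρ U) {ε : ℝ} (hε : 0 < ε) :
    ∃ η > 0, Metric.ball p η ⊆ U ∧ ∀ q ∈ Metric.ball p η, ∀ z ∈ Metric.ball p η,
      |ρ z - ρ q - fderiv ℝ ρ p (z - q)| ≤ ε * ‖z - q‖ := by
  have hcont : ContinuousOn (fderiv ℝ ρ) U :=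
    hρ.continuousOn_fderiv_of_isOpen hU (by norm_num)
  have hca : ContinuousAt (fderiv ℝ ρ) p := hcont.continuousAt (hU.mem_nhds hpU)
  rw [Metric.continuousAt_iff] at hca
  obtain ⟨δ, hδ, hδ2⟩ := hca ε hε
  obtain ⟨δ₂, hδ₂, hδ₂'⟩ := Metric.isOpen_iff.mp hU p hpU
  refine ⟨min δ δ₂, lt_min hδ hδ₂, ?_, ?_⟩
  · exact fun x hx => hδ₂' (Metric.ball_subset_ball (min_le_right _ _) hx)
  intro q hq z hz
  set f := fderiv ℝ ρ p
  set B := Metric.ball p (min δ δ₂)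
  have hBU : B ⊆ U := fun x hx => hδ₂' (Metric.ball_subset_ball (min_le_right _ _) hx)
  have hder : ∀ x ∈ B, HasFDerivWithinAt (fun y => ρ y - f y) (fderiv ℝ ρ x - f) B x := by
    intro x hx
    have h1 : HasFDerivAt ρ (fderiv ℝ ρ x) x :=
      ((hρ.differentiableOn (by norm_num)).differentiableAt
        (hU.mem_nhds (hBU hx))).hasFDerivAt
    exact (h1.sub (f.hasFDerivAt)).hasFDerivWithinAt
  have hbound : ∀ x ∈ B, ‖fderiv ℝ ρ x - f‖ ≤ ε := by
    intro x hx
    have := hδ2 (lt_of_lt_of_le (Metric.mem_ball.mp hx) (min_le_left _ _))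
    rw [dist_eq_norm] at this
    exact this.le
  have := Convex.norm_image_sub_le_of_norm_hasFDerivWithin_le hder hbound
    (convex_ball p _) hq hz
  rw [Real.norm_eq_abs] at this
  calc |ρ z - ρ q - f (z - q)| = |(ρ z - f z) - (ρ q - f q)| := by rw [map_sub]; ring_nf
    _ ≤ ε * ‖z - q‖ := this

lemma mem_scaled (D : Set ℂ) (a c : ℂ) (hc : c ≠ 0) (w : ℂ) :
    w ∈ (fun z => (z - a) / c) '' D ↔ a + c * w ∈ D := by
  constructor
  · rintro ⟨z, hz, rfl⟩
    have h : a + c * ((z - a)/c) = z := by field_simp; ring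
    rwa [h]
  · intro h
    exact ⟨a + c * w, h, by field_simp; ring⟩

lemma core (D U : Set ℂ) (hU : IsOpen U) (p : ℂ) (hpU : p ∈ U) (ρ : ℂ → ℝ)
    (hρ : ContDiffOn ℝ 2 ρ U)
    (hdef : U ∩ D = {z ∈ U | ρ z < 0})
    (pj : ℕ → ℂ) (hneg : ∀ j, ρ (pj j) < 0)
    (hpj : Tendsto pj atTop (nhds p)) (hρp : ρ p = 0)
    (R ε : ℝ) (hR : 0 < R) (hε : 0 < ε) :
    ∃ ν : ℕ, ∀ j, ν ≤ j → ∀ w : ℂ, ‖w‖ ≤ R →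
      ((-1 + 2 * (wirtingerZR ρ p * w).re < -ε →
          w ∈ (fun z => (z - pj j) / (-(ρ (pj j)) : ℂ)) '' D) ∧
       (ε < -1 + 2 * (wirtingerZR ρ p * w).re →
          w ∉ (fun z => (z - pj j) / (-(ρ (pj j)) : ℂ)) '' D)) := by
  obtain ⟨η, hη, hηU, hest⟩ := key_est U hU p hpU ρ hρ (ε := ε / R) (by positivity)
  have htt : Tendsto (fun j => ρ (pj j)) atTop (nhds 0) := by
    have hc : ContinuousAt ρ p := hρ.continuousOn.continuousAt (hU.mem_nhds hpU)
    have := hc.tendsto.comp hpj; rw [hρp] at this; exact this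
  obtain ⟨ν₁, hν₁⟩ := Metric.tendsto_atTop.mp hpj (η/2) (by positivity)
  obtain ⟨ν₂, hν₂⟩ := Metric.tendsto_atTop.mp htt (η/(2*R)) (by positivity)
  refine ⟨max ν₁ ν₂, fun j hj w hw => ?_⟩
  set s : ℝ := -(ρ (pj j)) with hs_def
  have hs : 0 < s := by rw [hs_def]; linarith [hneg j]
  have hd1 := hν₁ j (le_trans (le_max_left _ _) hj)
  have hd2 := hν₂ j (le_trans (le_max_right _ _) hj)
  have hsmall : s < η / (2*R) := by
    rw [Real.dist_eq, sub_zero, abs_of_neg (hneg j)] at hd2; exact hd2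
  have hsR : s * R < η / 2 := by
    calc s * R < η/(2*R) * R := mul_lt_mul_of_pos_right hsmall hR
      _ = η/2 := by field_simp
  have hqball : pj j ∈ Metric.ball p η := Metric.mem_ball.mpr (by linarith)
  set z : ℂ := pj j + (s : ℂ) * w with hz_def
  have hnormsw : ‖(s:ℂ)*w‖ = s * ‖w‖ := by
    rw [norm_mul, Complex.norm_real, Real.norm_eq_abs, abs_of_pos hs]
  have hzball : z ∈ Metric.ball p η := by
    have h1 : dist z (pj j) = s * ‖w‖ := by
      rw [dist_eq_norm, hz_def, add_sub_cancel_left, hnormsw]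
    have h3 : s * ‖w‖ ≤ s * R := mul_le_mul_of_nonneg_left hw hs.le
    refine Metric.mem_ball.mpr ?_
    calc dist z p ≤ dist z (pj j) + dist (pj j) p := dist_triangle _ _ _
      _ = s * ‖w‖ + dist (pj j) p := by rw [h1]
      _ ≤ s * R + dist (pj j) p := by linarith
      _ < η/2 + η/2 := by exact add_lt_add_of_le_of_lt hsR.le hd1
      _ = η := by ring
  have hest' := hest (pj j) hqball z hzball
  have hzq : z - pj j = (s:ℂ) * w := by rw [hz_def]; ring
  have hfw : fderiv ℝ ρ p ((s:ℂ)*w) = s * (fderiv ℝ ρ p w) := by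
    rw [← Complex.real_smul, map_smul, smul_eq_mul]
  rw [hzq, hfw, hnormsw] at hest'
  have hrq : ρ (pj j) = -s := by rw [hs_def]; ring
  set F := fderiv ℝ ρ p w with hF
  have hbound : |ρ z / s - (-1 + F)| ≤ ε := by
    have h1 : ρ z / s - (-1 + F) = (ρ z - ρ (pj j) - s * F)/s := by
      rw [hrq]; field_simp; ring
    rw [h1, abs_div, abs_of_pos hs, div_le_iff₀ hs]
    calc |ρ z - ρ (pj j) - s * F| ≤ ε/R * (s * ‖w‖) := hest'
      _ ≤ ε/R * (s * R) := by gcongr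
      _ = ε * s := by field_simp
  have hcoe : ((s:ℝ):ℂ) = (-(ρ (pj j)) : ℂ) := by rw [hs_def]; push_cast; ring
  have hsC : ((s:ℝ):ℂ) ≠ 0 := by
    simp only [ne_eq, Complex.ofReal_eq_zero]; exact hs.ne'
  have himg : w ∈ (fun z => (z - pj j) / (-(ρ (pj j)) : ℂ)) '' D ↔ z ∈ D := by
    rw [← hcoe, mem_scaled D (pj j) _ hsC w, hz_def]
  have hzU : z ∈ U := hηU hzball
  have hDz : z ∈ D ↔ ρ z < 0 := by
    have h := Set.ext_iff.mp hdef z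
    simp only [Set.mem_inter_iff, Set.mem_setOf_eq] at h
    exact ⟨fun hz => (h.mp ⟨hzU, hz⟩).2, fun hz => (h.mpr ⟨hzU, hz⟩).2⟩
  have hFw : F = 2 * (wirtingerZR ρ p * w).re := wirt_linear ρ p w
  rw [hFw] at hbound
  rw [abs_le] at hbound
  constructor
  · intro hL
    rw [himg, hDz]
    have h0 : ρ z / s < 0 := by linarith [hbound.2]
    by_contra hge
    push_neg at hge
    have : 0 ≤ ρ z / s := div_nonneg hge hs.le
    linarith
  · intro hL hin
    rw [himg, hDz] at hin
    have h0 : 0 < ρ z / s := by linarith [hbound.1]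
    have h1 : ρ z / s < 0 := div_neg_of_neg_of_pos hin hs
    linarith

lemma re_mul_le (σ u : ℂ) : (σ * u).re ≤ ‖σ‖ * ‖u‖ := by
  calc (σ * u).re ≤ |(σ * u).re| := le_abs_self _
    _ ≤ ‖σ * u‖ := Complex.abs_re_le_norm _
    _ = ‖σ‖ * ‖u‖ := by rw [norm_mul]

/-- Scaling a bounded domain with `C²` boundary near `p` along an orbit `p_j → p` by
`T_j(z) = (z − p_j)/(−ρ(p_j))` yields kernels `ker(T_j(D)) = ℍ⁻` and
`ker((T_j(D))ᶜ) = ℍ⁺`, where `ℍ∓ = {z : ±(−1 + 2 Re(∂ρ(p) z)) < 0}`. -/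
theorem scaled_domains_kernel
    (D : Set ℂ) (hDopen : IsOpen D) (hDconn : IsConnected D)
    (hDbdd : Bornology.IsBounded D)
    (p : ℂ) (hp : p ∈ frontier D)
    (U : Set ℂ) (hU : IsOpen U) (hpU : p ∈ U)
    (ρ : ℂ → ℝ) (hρ : ContDiffOn ℝ 2 ρ U)
    (hdef : U ∩ D = {z ∈ U | ρ z < 0})
    (hdρ : ∀ z ∈ U ∩ frontier D, fderiv ℝ ρ z ≠ 0)
    (hwirt : wirtingerZR ρ p ≠ 0)
    (pj : ℕ → ℂ) (hpjD : ∀ j, pj j ∈ D ∩ U)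
    (hpj : Tendsto pj atTop (nhds p)) :
    seqKernel (fun j => (fun z => (z - pj j) / (-(ρ (pj j)) : ℂ)) '' D) =
        {z : ℂ | -1 + 2 * (wirtingerZR ρ p * z).re < 0} ∧
      seqKernel (fun j => ((fun z => (z - pj j) / (-(ρ (pj j)) : ℂ)) '' D)ᶜ) =
        {z : ℂ | -1 + 2 * (wirtingerZR ρ p * z).re > 0} := by
  have hneg : ∀ j, ρ (pj j) < 0 := by
    intro j
    have h : pj j ∈ U ∩ D := ⟨(hpjD j).2, (hpjD j).1⟩
    rw [hdef] at h
    exact h.2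
  have hpD : p ∉ D := by
    intro hpD
    exact hp.2 (by rwa [hDopen.interior_eq])
  have hρp : ρ p = 0 := by
    have htt : Tendsto (fun j => ρ (pj j)) atTop (nhds (ρ p)) :=
      ((hρ.continuousOn.continuousAt (hU.mem_nhds hpU)).tendsto).comp hpj
    have hle : ρ p ≤ 0 := le_of_tendsto htt (Eventually.of_forall fun j => (hneg j).le)
    rcases lt_or_eq_of_le hle with hlt | he
    · exfalso
      have : p ∈ U ∩ D := by rw [hdef]; exact ⟨hpU, hlt⟩
      exact hpD this.2
    · exact he
  set σ := wirtingerZR ρ p with hσ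
  set M := ‖σ‖ with hM
  have hM0 : 0 ≤ M := norm_nonneg _
  have hσpos : 0 < Complex.normSq σ := Complex.normSq_pos.mpr hwirt
  set S : ℕ → Set ℂ := fun j => (fun z => (z - pj j) / (-(ρ (pj j)) : ℂ)) '' D with hS
  have hLlip : ∀ w w' : ℂ,
      -1 + 2 * (σ * w).re ≤ -1 + 2 * (σ * w').re + 2 * M * ‖w - w'‖ := by
    intro w w'
    have h1 : (σ * w).re - (σ * w').re = (σ * (w - w')).re := by
      rw [mul_sub, Complex.sub_re]
    have h2 : (σ * (w - w')).re ≤ M * ‖w - w'‖ := re_mul_le σ (w - w')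
    linarith
  have hcore := core D U hU p hpU ρ hρ hdef pj hneg hpj hρp
  -- translate direction: adding c * conj σ increases L by 2 c normSq σ
  have hLshift : ∀ (w : ℂ) (c : ℝ),
      -1 + 2 * (σ * (w + (c:ℂ) * (starRingEnd ℂ) σ)).re
        = (-1 + 2 * (σ * w).re) + 2 * (c * Complex.normSq σ) := by
    intro w c
    have h : σ * (w + (c:ℂ) * (starRingEnd ℂ) σ)
        = σ * w + ((c * Complex.normSq σ : ℝ) : ℂ) := by
      push_cast
      rw [← Complex.mul_conj]
      ring
    rw [h, Complex.add_re, Complex.ofReal_re]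
    ring
  constructor
  · ext w₀
    simp only [Set.mem_setOf_eq]
    constructor
    · -- seqKernel S ⊆ H⁻
      intro hw₀
      by_contra hL0
      push_neg at hL0
      simp only [seqKernel, Set.mem_iUnion] at hw₀
      obtain ⟨ν, hν⟩ := hw₀
      obtain ⟨r, hr, hball⟩ := Metric.isOpen_iff.mp isOpen_interior w₀ hν
      have hball' : Metric.ball w₀ r ⊆ ⋂ μ ∈ {μ : ℕ | ν ≤ μ}, S μ :=
        hball.trans interior_subset
      set c : ℝ := r / (2 * (M + 1)) with hc_def
      have hc : 0 < c := by positivity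
      set w₁ : ℂ := w₀ + (c:ℂ) * (starRingEnd ℂ) σ with hw₁
      have hw₁ball : w₁ ∈ Metric.ball w₀ r := by
        rw [Metric.mem_ball, dist_eq_norm, hw₁, add_sub_cancel_left, norm_mul,
          Complex.norm_real, Real.norm_eq_abs, abs_of_pos hc, RCLike.norm_conj]
        calc c * M ≤ c * (M + 1) := by nlinarith
          _ = r / 2 := by rw [hc_def]; field_simp
          _ < r := by linarith
      have hLw₁ : -1 + 2 * (σ * w₁).re
          = (-1 + 2 * (σ * w₀).re) + 2 * (c * Complex.normSq σ) := hLshift w₀ c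
      have hLpos : 0 < -1 + 2 * (σ * w₁).re := by
        rw [hLw₁]; nlinarith
      obtain ⟨ν', hν'⟩ := hcore (‖w₁‖ + 1) ((-1 + 2 * (σ * w₁).re) / 2)
        (by positivity) (by linarith)
      have h1 : w₁ ∈ S (max ν ν') := by
        have := hball' hw₁ball
        simp only [Set.mem_iInter, Set.mem_setOf_eq] at this
        exact this (max ν ν') (le_max_left _ _)
      have h2 : w₁ ∉ S (max ν ν') :=
        (hν' (max ν ν') (le_max_right _ _) w₁ (by linarith)).2 (by linarith)
      exact h2 h1
    · -- H⁻ ⊆ seqKernel S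
      intro hw₀
      set L₀ := -1 + 2 * (σ * w₀).re with hL₀
      set r : ℝ := (-L₀) / (4 * (M + 1)) with hr_def
      have hr : 0 < r := by
        rw [hr_def]
        have : 0 < -L₀ := by linarith
        positivity
      obtain ⟨ν, hν⟩ := hcore (‖w₀‖ + r) ((-L₀) / 4) (by positivity) (by linarith)
      simp only [seqKernel, Set.mem_iUnion]
      refine ⟨ν, mem_interior.mpr ⟨Metric.ball w₀ r, ?_, Metric.isOpen_ball,
        Metric.mem_ball_self hr⟩⟩
      intro w hwball
      simp only [Set.mem_iInter, Set.mem_setOf_eq]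
      intro μ hμ
      have hwd : ‖w - w₀‖ < r := by
        rw [← dist_eq_norm]; exact Metric.mem_ball.mp hwball
      have hwR : ‖w‖ ≤ ‖w₀‖ + r := by
        calc ‖w‖ = ‖w₀ + (w - w₀)‖ := by ring_nf
          _ ≤ ‖w₀‖ + ‖w - w₀‖ := norm_add_le _ _
          _ ≤ ‖w₀‖ + r := by linarith
      have hrM : 2 * (M + 1) * r = -L₀ / 2 := by
        rw [hr_def]; field_simp; ring
      have hLw : -1 + 2 * (σ * w).re < -((-L₀) / 4) := by
        have h1 := hLlip w w₀
        have h2 : 2 * M * ‖w - w₀‖ ≤ 2 * (M + 1) * r := by nlinarith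
        rw [hrM] at h2
        rw [← hL₀] at h1
        linarith
      exact (hν μ hμ w hwR).1 hLw
  · ext w₀
    simp only [Set.mem_setOf_eq]
    constructor
    · -- seqKernel Sᶜ ⊆ H⁺
      intro hw₀
      by_contra hL0
      push_neg at hL0
      simp only [seqKernel, Set.mem_iUnion] at hw₀
      obtain ⟨ν, hν⟩ := hw₀
      obtain ⟨r, hr, hball⟩ := Metric.isOpen_iff.mp isOpen_interior w₀ hν
      have hball' : Metric.ball w₀ r ⊆ ⋂ μ ∈ {μ : ℕ | ν ≤ μ}, (S μ)ᶜ :=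
        hball.trans interior_subset
      set c : ℝ := r / (2 * (M + 1)) with hc_def
      have hc : 0 < c := by positivity
      set w₁ : ℂ := w₀ + ((-c : ℝ):ℂ) * (starRingEnd ℂ) σ with hw₁
      have hw₁ball : w₁ ∈ Metric.ball w₀ r := by
        rw [Metric.mem_ball, dist_eq_norm, hw₁, add_sub_cancel_left, norm_mul,
          Complex.norm_real, Real.norm_eq_abs, abs_of_neg (neg_neg_iff_pos.mpr hc),
          RCLike.norm_conj]
        calc -(-c) * M ≤ c * (M + 1) := by nlinarith
          _ = r / 2 := by rw [hc_def]; field_simp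
          _ < r := by linarith
      have hLw₁ : -1 + 2 * (σ * w₁).re
          = (-1 + 2 * (σ * w₀).re) + 2 * ((-c) * Complex.normSq σ) := hLshift w₀ (-c)
      have hLneg : -1 + 2 * (σ * w₁).re < 0 := by
        rw [hLw₁]; nlinarith
      obtain ⟨ν', hν'⟩ := hcore (‖w₁‖ + 1) ((-(-1 + 2 * (σ * w₁).re)) / 2)
        (by positivity) (by linarith)
      have h1 : w₁ ∈ (S (max ν ν'))ᶜ := by
        have := hball' hw₁ball
        simp only [Set.mem_iInter, Set.mem_setOf_eq] at this
        exact this (max ν ν') (le_max_left _ _)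
      have h2 : w₁ ∈ S (max ν ν') :=
        (hν' (max ν ν') (le_max_right _ _) w₁ (by linarith)).1 (by linarith)
      exact h1 h2
    · -- H⁺ ⊆ seqKernel Sᶜ
      intro hw₀
      set L₀ := -1 + 2 * (σ * w₀).re with hL₀
      set r : ℝ := L₀ / (4 * (M + 1)) with hr_def
      have hr : 0 < r := by
        rw [hr_def]
        have : 0 < L₀ := hw₀
        positivity
      obtain ⟨ν, hν⟩ := hcore (‖w₀‖ + r) (L₀ / 4) (by positivity)
        (by linarith)
      simp only [seqKernel, Set.mem_iUnion]
      refine ⟨ν, mem_interior.mpr ⟨Metric.ball w₀ r, ?_, Metric.isOpen_ball,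
        Metric.mem_ball_self hr⟩⟩
      intro w hwball
      simp only [Set.mem_iInter, Set.mem_setOf_eq]
      intro μ hμ
      have hwd : ‖w - w₀‖ < r := by
        rw [← dist_eq_norm]; exact Metric.mem_ball.mp hwball
      have hwR : ‖w‖ ≤ ‖w₀‖ + r := by
        calc ‖w‖ = ‖w₀ + (w - w₀)‖ := by ring_nf
          _ ≤ ‖w₀‖ + ‖w - w₀‖ := norm_add_le _ _
          _ ≤ ‖w₀‖ + r := by linarith
      have hrM : 2 * (M + 1) * r = L₀ / 2 := by
        rw [hr_def]; field_simp; ring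
      have hLw : L₀ / 4 < -1 + 2 * (σ * w).re := by
        have h1 := hLlip w₀ w
        have h2 : 2 * M * ‖w₀ - w‖ ≤ 2 * (M + 1) * r := by
          rw [norm_sub_rev]; nlinarith
        rw [hrM] at h2
        rw [← hL₀] at h1
        linarith
      exact (hν μ hμ w hwR).2 hLw
end
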